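/- arXiv:1104.2301 — 4 statements merged into one kernel-verified Lean document; each statement's English description precedes it below -/
import Mathlib

section
/- If φ: (Γ̃, ṽ) → (Γ, v) is a directed covering of rooted directed graphs, then the induced map on fundamental monoids φ: Γ̃*(ṽ) → Γ*(v) is injective and its image is a right unitary submonoid of Γ*(v). -/
structure DGraph : Type 1 where
  V : Type
  E : Type
  ι : E → V
  τ : E → V

namespace DGraph

/-- A directed path from `u` to `w` given by its list of edges. -/
inductive Path (G : DGraph) : G.V → G.V → List G.E → Prop
  | nil (v : G.V) : Path G v v []
  | cons (e : G.E) {w : G.V} {p : List G.E} :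
      Path G (G.τ e) w p → Path G (G.ι e) w (e :: p)

/-- The list of vertices visited by a path `p` starting at `u`. -/
def verts (G : DGraph) (u : G.V) (p : List G.E) : List G.V :=
  u :: p.map G.τ

/-- A simple directed path: a path visiting no vertex twice. -/
def SimplePath (G : DGraph) (u w : G.V) (p : List G.E) : Prop :=
  G.Path u w p ∧ (G.verts u p).Nodup

/-- `w` is reachable from `u` by a directed path. -/
def Reach (G : DGraph) (u w : G.V) : Prop := ∃ p, G.Path u w p

/-- A graph is rooted at `v` if every vertex is reachable from `v`. -/
def Rooted (G : DGraph) (v : G.V) : Prop := ∀ w, G.Reach v w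

end DGraph


/-- A morphism of directed graphs. -/
structure DMorphism (G G' : DGraph) where
  mapV : G.V → G'.V
  mapE : G.E → G'.E
  map_ι : ∀ e, mapV (G.ι e) = G'.ι (mapE e)
  map_τ : ∀ e, mapV (G.τ e) = G'.τ (mapE e)

namespace DMorphism

variable {G G' : DGraph}

/-- A directed immersion: the induced map on each star `St(v) → St(φ(v))`
is injective. -/
def Immersion (φ : DMorphism G G') : Prop :=
  ∀ e f : G.E, G.ι e = G.ι f → φ.mapE e = φ.mapE f → e = f

/-- A directed covering: surjective on vertices and bijective on each star. -/
def Covering (φ : DMorphism G G') : Prop :=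
  Function.Surjective φ.mapV ∧ φ.Immersion ∧
    ∀ (v : G.V) (e' : G'.E), G'.ι e' = φ.mapV v →
      ∃ e : G.E, G.ι e = v ∧ φ.mapE e = e'

end DMorphism


namespace DGraph

theorem path_cons_inv {G : DGraph} {x y : G.V} {e : G.E} {p : List G.E}
    (h : G.Path x y (e :: p)) : x = G.ι e ∧ G.Path (G.τ e) y p :=
  match h with
  | .cons _ h' => ⟨rfl, h'⟩

theorem path_nil_inv {G : DGraph} {x y : G.V} (h : G.Path x y []) : x = y :=
  match h with
  | .nil _ => rfl

/-- Paths with the same edge list and start have the same endpoint. -/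
theorem path_end_unique {G : DGraph} : ∀ {p : List G.E} {x y y' : G.V},
    G.Path x y p → G.Path x y' p → y = y'
  | [], _, _, _, h, h' => (path_nil_inv h).symm.trans (path_nil_inv h')
  | _ :: _, _, _, _, h, h' =>
    path_end_unique (path_cons_inv h).2 (path_cons_inv h').2

/-- Splitting a path along a list concatenation. -/
theorem path_append_split {G : DGraph} : ∀ {a b : List G.E} {x y : G.V},
    G.Path x y (a ++ b) → ∃ z, G.Path x z a ∧ G.Path z y b
  | [], _, x, _, h => ⟨x, Path.nil x, h⟩
  | e :: a, b, x, y, h => by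
    obtain ⟨hx, h1⟩ := path_cons_inv h
    obtain ⟨z, hz1, hz2⟩ := path_append_split h1
    exact ⟨z, hx ▸ Path.cons e hz1, hz2⟩

/-- Unique path lifting for immersions. -/
theorem lift_unique {Gt G : DGraph} (φ : DMorphism Gt G) (himm : φ.Immersion) :
    ∀ {p q : List Gt.E} {x a b : Gt.V},
      Gt.Path x a p → Gt.Path x b q → p.map φ.mapE = q.map φ.mapE → p = q
  | [], [], _, _, _, _, _, _ => rfl
  | [], _ :: _, _, _, _, _, _, hm => by simp at hm
  | _ :: _, [], _, _, _, _, _, hm => by simp at hm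
  | e :: p, f :: q, x, a, b, hp, hq, hm => by
    obtain ⟨hxe, hp1⟩ := path_cons_inv hp
    obtain ⟨hxf, hq1⟩ := path_cons_inv hq
    simp only [List.map_cons, List.cons.injEq] at hm
    obtain rfl : e = f := himm e f (hxe ▸ hxf) hm.1
    rw [lift_unique φ himm hp1 hq1 hm.2]

/-- A directed covering of rooted graphs induces an injective map on
fundamental monoids whose image is a right unitary submonoid: loops at the
root lift uniquely, and if a loop `u` and the product `u ++ w` both lie in the
image, then so does `w`. -/
theorem covering_fundamental_monoid (Gt G : DGraph) (vt : Gt.V) (v : G.V)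
    (φ : DMorphism Gt G) (hroott : Gt.Rooted vt) (hroot : G.Rooted v)
    (hv : φ.mapV vt = v) (hcov : φ.Covering) :
    (∀ p q : List Gt.E, Gt.Path vt vt p → Gt.Path vt vt q →
        p.map φ.mapE = q.map φ.mapE → p = q) ∧
      (∀ u w : List G.E, G.Path v v u → G.Path v v w →
        (∃ p : List Gt.E, Gt.Path vt vt p ∧ p.map φ.mapE = u) →
        (∃ r : List Gt.E, Gt.Path vt vt r ∧ r.map φ.mapE = u ++ w) →
        ∃ s : List Gt.E, Gt.Path vt vt s ∧ s.map φ.mapE = w) := by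
  refine ⟨fun p q hp hq hm => lift_unique φ hcov.2.1 hp hq hm, ?_⟩
  intro u w hu hw ⟨p, hp, hpu⟩ ⟨r, hr, hruw⟩
  -- split r as the lift of u followed by the lift of w
  have hsplit : Gt.Path vt vt (r.take u.length ++ r.drop u.length) := by
    rwa [List.take_append_drop]
  obtain ⟨z, hz1, hz2⟩ := path_append_split hsplit
  have hmap : (r.take u.length).map φ.mapE = u := by
    have : (r.map φ.mapE).take u.length = u := by
      rw [hruw, List.take_left]
    rwa [← List.map_take] at this
  have hpq : p = r.take u.length :=
    lift_unique φ hcov.2.1 hp hz1 (by rw [hpu, hmap])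
  have hzvt : z = vt := path_end_unique hz1 (hpq ▸ hp)
  refine ⟨r.drop u.length, hzvt ▸ hz2, ?_⟩
  have : (r.map φ.mapE).drop u.length = w := by
    rw [hruw]
    simp [List.drop_left]
  rwa [← List.map_drop] at this

end DGraph
end

section
/- Every right unitary submonoid of the fundamental monoid Γ*(v) of a rooted directed graph (Γ, v) arises as the image of the fundamental monoid under some directed covering of rooted graphs (Γ̃, ṽ) → (Γ, v). -/
namespace DGraph

variable {G : DGraph}

theorem Path.append {u w x : G.V} {p q : List G.E} (hp : G.Path u w p) (hq : G.Path w x q) :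
    G.Path u x (p ++ q) := by
  induction hp with
  | nil => exact hq
  | cons e _ ih => exact .cons e (ih hq)

theorem Path.eq_of_nil {u w : G.V} (h : G.Path u w []) : u = w := by
  cases h
  rfl

theorem Path.cons_iff {u w : G.V} {e : G.E} {p : List G.E} :
    G.Path u w (e :: p) ↔ G.ι e = u ∧ G.Path (G.τ e) w p := by
  constructor
  · intro h
    generalize hl : e :: p = l at h
    cases h with
    | nil => cases hl
    | cons f h => cases hl; exact ⟨rfl, h⟩
  · rintro ⟨rfl, h⟩
    exact .cons e h

theorem Path.of_append_left {u w x : G.V} {p q : List G.E} (hpq : G.Path u w (p ++ q))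
    (hp : G.Path u x p) : G.Path x w q := by
  induction hp with
  | nil => exact hpq
  | cons e _ ih => exact ih (Path.cons_iff.mp hpq).2

theorem Path.target_unique {u w w' : G.V} {p : List G.E} (h : G.Path u w p)
    (h' : G.Path u w' p) : w = w' :=
  (Path.of_append_left (p.append_nil.symm ▸ h') h).eq_of_nil

end DGraph

namespace DMorphism

variable {G G' : DGraph} (φ : DMorphism G G')

theorem map_path {u w : G.V} {p : List G.E} (h : G.Path u w p) :
    G'.Path (φ.mapV u) (φ.mapV w) (p.map φ.mapE) := by
  induction h with
  | nil => exact .nil _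
  | cons e _ ih => rw [φ.map_ι]; exact .cons _ (φ.map_τ e ▸ ih)

theorem exists_path_lift
    (hlift : ∀ (x : G.V) (e' : G'.E), G'.ι e' = φ.mapV x → ∃ e : G.E, G.ι e = x ∧ φ.mapE e = e')
    {q : List G'.E} : ∀ {x : G.V} {w' : G'.V}, G'.Path (φ.mapV x) w' q →
      ∃ (y : G.V) (p : List G.E), G.Path x y p ∧ p.map φ.mapE = q := by
  induction q with
  | nil => intro x _ _; exact ⟨x, [], .nil x, rfl⟩
  | cons e' q ih =>
    intro x w' hq
    obtain ⟨he', hrest⟩ := DGraph.Path.cons_iff.mp hq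
    obtain ⟨e, rfl, rfl⟩ := hlift x e' he'
    obtain ⟨y, p, hp, hmap⟩ := ih (x := G.τ e) (φ.map_τ e ▸ hrest)
    exact ⟨y, e :: p, .cons e hp, by simp [hmap]⟩

end DMorphism

namespace DGraph

variable (G : DGraph) (v : G.V) (N : Language G.E)

def ResidualVertex : Type :=
  {x : G.V × Language G.E // ∃ p, G.Path v x.1 p ∧ x.2 = N.leftQuotient p}

variable {G v N}

def ResidualVertex.base : ResidualVertex G v N := ⟨(v, N), [], .nil v, rfl⟩

def ResidualVertex.step (x : ResidualVertex G v N) (e : G.E) (he : G.ι e = x.1.1) :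
    ResidualVertex G v N :=
  ⟨(G.τ e, x.1.2.leftQuotient [e]), by
    obtain ⟨p, hp, hx⟩ := x.2
    exact ⟨p ++ [e], hp.append (he ▸ .cons e (.nil _)), by rw [hx, Language.leftQuotient_append]⟩⟩

variable (G v N)

def residualCover : DGraph where
  V := ResidualVertex G v N
  E := {a : ResidualVertex G v N × G.E // G.ι a.2 = a.1.1.1}
  ι a := a.1.1
  τ a := a.1.1.step a.1.2 a.2

def residualCoverProj : DMorphism (residualCover G v N) G where
  mapV x := x.1.1
  mapE a := a.1.2
  map_ι a := a.2.symm
  map_τ _ := rfl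

variable {G v N}

theorem residualCoverProj_exists_lift (x : (residualCover G v N).V) (e' : G.E)
    (h : G.ι e' = (residualCoverProj G v N).mapV x) :
    ∃ e, (residualCover G v N).ι e = x ∧ (residualCoverProj G v N).mapE e = e' :=
  ⟨⟨(x, e'), h⟩, rfl, rfl⟩

theorem residualCover_snd_eq_leftQuotient_of_path {x y : (residualCover G v N).V}
    {p : List (residualCover G v N).E} (h : (residualCover G v N).Path x y p) :
    y.1.2 = x.1.2.leftQuotient (p.map (residualCoverProj G v N).mapE) := by
  induction h with
  | nil => rfl
  | cons a _ ih =>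
    rw [ih, List.map_cons, ← List.singleton_append, Language.leftQuotient_append]
    rfl

theorem residualCover_exists_path_from_base_iff (y : (residualCover G v N).V) (q : List G.E) :
    (∃ p, (residualCover G v N).Path ResidualVertex.base y p ∧
        p.map (residualCoverProj G v N).mapE = q) ↔
      G.Path v y.1.1 q ∧ y.1.2 = N.leftQuotient q := by
  constructor
  · rintro ⟨p, hp, rfl⟩
    exact ⟨(residualCoverProj G v N).map_path hp, residualCover_snd_eq_leftQuotient_of_path hp⟩
  · rintro ⟨hq, hy⟩
    obtain ⟨y', p, hp, rfl⟩ :=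
      (residualCoverProj G v N).exists_path_lift residualCoverProj_exists_lift
        (x := ResidualVertex.base) hq
    have hy' : y' = y := Subtype.ext <| Prod.ext
      (((residualCoverProj G v N).map_path hp).target_unique hq)
      ((residualCover_snd_eq_leftQuotient_of_path hp).trans hy.symm)
    exact ⟨p, hy' ▸ hp, rfl⟩

theorem residualCover_rooted : (residualCover G v N).Rooted ResidualVertex.base := by
  intro y
  obtain ⟨p, hp, hy⟩ := y.2
  obtain ⟨q, hq, -⟩ := (residualCover_exists_path_from_base_iff y p).mpr ⟨hp, hy⟩
  exact ⟨q, hq⟩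

theorem residualCoverProj_covering (hroot : G.Rooted v) :
    (residualCoverProj G v N).Covering := by
  refine ⟨fun u => ?_, fun e f hι hmap => Subtype.ext (Prod.ext hι hmap),
    residualCoverProj_exists_lift⟩
  obtain ⟨p, hp⟩ := hroot u
  exact ⟨⟨(u, N.leftQuotient p), p, hp, rfl⟩, rfl⟩

theorem mem_iff_leftQuotient_eq_self (hloops : ∀ n ∈ N, G.Path v v n)
    (hone : ([] : List G.E) ∈ N) (hmul : ∀ p ∈ N, ∀ q ∈ N, p ++ q ∈ N)
    (hru : ∀ p ∈ N, ∀ q : List G.E, G.Path v v q → p ++ q ∈ N → q ∈ N) {q : List G.E} :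
    q ∈ N ↔ G.Path v v q ∧ N.leftQuotient q = N := by
  refine ⟨fun hq => ⟨hloops q hq, Set.ext fun r => ⟨fun hqr => ?_, hmul q hq r⟩⟩, ?_⟩
  · exact hru q hq r ((hloops _ hqr).of_append_left (hloops q hq)) hqr
  · rintro ⟨-, hN⟩
    rw [← hN, Language.mem_leftQuotient, List.append_nil] at hone
    exact hone

/-- Every right unitary submonoid `N` of the fundamental monoid of a rooted
directed graph `(Γ, v)` arises as the image of the fundamental monoid of some
directed covering of rooted graphs `(Γ̃, ṽ) → (Γ, v)`. -/
theorem right_unitary_realized_by_covering (G : DGraph) (v : G.V)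
    (hroot : G.Rooted v) (N : Set (List G.E))
    (hloops : ∀ n ∈ N, G.Path v v n)
    (hone : ([] : List G.E) ∈ N)
    (hmul : ∀ p ∈ N, ∀ q ∈ N, p ++ q ∈ N)
    (hru : ∀ p ∈ N, ∀ q : List G.E, G.Path v v q → p ++ q ∈ N → q ∈ N) :
    ∃ (Gt : DGraph) (vt : Gt.V) (φ : DMorphism Gt G),
      Gt.Rooted vt ∧ φ.mapV vt = v ∧ φ.Covering ∧
        {q : List G.E | ∃ p : List Gt.E, Gt.Path vt vt p ∧ p.map φ.mapE = q}
          = N := by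
  refine ⟨residualCover G v N, ResidualVertex.base, residualCoverProj G v N, residualCover_rooted,
    rfl, residualCoverProj_covering hroot, Set.ext fun q => ?_⟩
  exact (residualCover_exists_path_from_base_iff _ q).trans <|
    (and_congr_right' eq_comm).trans (mem_iff_leftQuotient_eq_self hloops hone hmul hru).symm

end DGraph
end

section
/- For a rooted directed graph (Γ, v) the following are equivalent: (1) for each vertex w there is a unique simple directed path from v to w; (2) (Γ, v) admits a unique directed spanning tree; (3) (Γ, v) admits a directed spanning tree T such that for each edge e not in T, the geodesic in T from v to the terminal vertex of e is an initial segment of the geodesic from v to the initial vertex of e. -/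
namespace DGraph

/-- A directed path from `u` to `w` all of whose edges lie in `ES`. -/
def PathIn (G : DGraph) (ES : Set G.E) (u w : G.V) (p : List G.E) : Prop :=
  G.Path u w p ∧ ∀ e ∈ p, e ∈ ES

/-- A directed rooted subtree of `G` rooted at `v`, given by a vertex set `VS`
and an edge set `ES`: it is a subgraph containing `v` in which every vertex is
reached from `v` by a unique directed path. -/
def IsRootedSubtree (G : DGraph) (v : G.V) (VS : Set G.V) (ES : Set G.E) : Prop :=
  v ∈ VS ∧ (∀ e ∈ ES, G.ι e ∈ VS ∧ G.τ e ∈ VS) ∧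
    ∀ w ∈ VS, ∃! p : List G.E, G.PathIn ES v w p

/-- A directed spanning tree of `G` rooted at `v`. -/
def IsSpanningTree (G : DGraph) (v : G.V) (ES : Set G.E) : Prop :=
  G.IsRootedSubtree v Set.univ ES

/-!
A set `T` of edges is a spanning tree rooted at `v` exactly when no edge of `T` ends at `v`, no
two edges of `T` end at the same vertex, and every vertex is reached from `v` inside `T`.

Fix a spanning tree `T`. Paths in `T` from `v` are simple. If every edge `e ∉ T` is a back edge,
i.e. `τ e` lies on the geodesic to `ι e`, then a simple path from `v` can never leave `T`: its
first edge outside `T` would return to a vertex already visited. Conversely, under the unique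
simple path property an edge `e ∉ T` that is not a back edge would extend the geodesic to `ι e`
to a second simple path to `τ e`. This gives (1) ⇔ (3).

If some `e ∉ T` is not a back edge, replacing the tree edges into `τ e` by `e` yields a second
spanning tree, so (2) ⇒ (1). Under (1) the edges lying on simple paths from `v` form a spanning
tree, and any spanning tree is contained in any other since both consist of the simple paths
from `v`, so (1) ⇒ (2).
-/

def UniqueSimplePaths (G : DGraph) (v : G.V) : Prop :=
  ∀ w, ∃! p, G.SimplePath v w p

def IsBackEdge (G : DGraph) (v : G.V) (T : Set G.E) (e : G.E) : Prop :=
  ∀ p q, G.PathIn T v (G.ι e) p → G.PathIn T v (G.τ e) q → q <+: p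

def simplePathEdges (G : DGraph) (v : G.V) : Set G.E :=
  {e | ∃ w p, G.SimplePath v w p ∧ e ∈ p}

section Paths

variable {G : DGraph} {u w x : G.V} {e : G.E} {p q : List G.E}

theorem path_nil_iff : G.Path u w [] ↔ u = w := by
  constructor
  · rintro ⟨⟩; rfl
  · rintro rfl; exact .nil u

theorem path_cons_iff : G.Path u w (e :: p) ↔ u = G.ι e ∧ G.Path (G.τ e) w p := by
  constructor
  · rintro ⟨⟩; exact ⟨rfl, by assumption⟩
  · rintro ⟨rfl, h⟩; exact .cons e h

theorem path_append_iff : G.Path u w (p ++ q) ↔ ∃ m, G.Path u m p ∧ G.Path m w q := by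
  induction p generalizing u with
  | nil => simp only [List.nil_append, path_nil_iff, exists_eq_left']
  | cons e p ih =>
    simp only [List.cons_append, path_cons_iff, ih]
    constructor
    · rintro ⟨rfl, m, h₁, h₂⟩; exact ⟨m, ⟨rfl, h₁⟩, h₂⟩
    · rintro ⟨m, ⟨rfl, h₁⟩, h₂⟩; exact ⟨rfl, m, h₁, h₂⟩

theorem path_concat_iff : G.Path u w (p ++ [e]) ↔ G.Path u (G.ι e) p ∧ G.τ e = w := by
  simp only [path_append_iff, path_cons_iff, path_nil_iff]
  constructor
  · rintro ⟨m, h, rfl, rfl⟩; exact ⟨h, rfl⟩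
  · rintro ⟨h, rfl⟩; exact ⟨_, h, rfl, rfl⟩

theorem verts_append : G.verts u (p ++ q) = G.verts u p ++ q.map G.τ := by
  simp [verts]

theorem start_mem_verts : u ∈ G.verts u p := List.mem_cons_self

theorem mem_verts_of_mem (he : e ∈ p) : G.τ e ∈ G.verts u p :=
  List.mem_cons_of_mem _ (List.mem_map_of_mem he)

theorem Path.end_mem_verts (h : G.Path u w p) : w ∈ G.verts u p := by
  induction h with
  | nil => exact start_mem_verts
  | cons e _ ih => exact List.mem_cons_of_mem _ ih

theorem Path.verts_append (h : G.Path u x p) : ∃ l, G.verts u (p ++ q) = l ++ G.verts x q := by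
  induction h with
  | nil => exact ⟨[], rfl⟩
  | cons e _ ih =>
    obtain ⟨l, hl⟩ := ih
    exact ⟨G.ι e :: l, congrArg (G.ι e :: ·) hl⟩

theorem Path.exists_split_of_mem_verts (h : G.Path u w p) (hx : x ∈ G.verts u p) :
    ∃ p₁ p₂, p = p₁ ++ p₂ ∧ G.Path u x p₁ ∧ G.Path x w p₂ := by
  induction h with
  | nil =>
    obtain rfl := List.mem_singleton.1 hx
    exact ⟨[], [], rfl, .nil _, .nil _⟩
  | cons e h ih =>
    rcases List.mem_cons.1 hx with rfl | hx
    · exact ⟨[], _, rfl, .nil _, .cons e h⟩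
    · obtain ⟨p₁, p₂, rfl, h₁, h₂⟩ := ih hx
      exact ⟨e :: p₁, p₂, rfl, .cons e h₁, h₂⟩

theorem SimplePath.prefix (h : G.SimplePath u w (p ++ q)) (hp : G.Path u x p) :
    G.SimplePath u x p :=
  ⟨hp, (verts_append ▸ h.2).of_append_left⟩

theorem SimplePath.suffix (h : G.SimplePath u w (p ++ q)) (hp : G.Path u x p)
    (hq : G.Path x w q) : G.SimplePath x w q := by
  obtain ⟨l, hl⟩ := hp.verts_append (q := q)
  exact ⟨hq, (hl ▸ h.2).of_append_right⟩

theorem simplePath_concat_iff :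
    G.SimplePath u w (p ++ [e]) ↔
      G.SimplePath u (G.ι e) p ∧ G.τ e ∉ G.verts u p ∧ G.τ e = w := by
  simp only [SimplePath, path_concat_iff, verts_append, List.map_cons, List.map_nil,
    List.nodup_append, List.nodup_singleton, List.mem_singleton]
  constructor
  · rintro ⟨⟨hp, rfl⟩, hnd, -, hτ⟩
    exact ⟨⟨hp, hnd⟩, fun h => hτ _ h _ rfl rfl, rfl⟩
  · rintro ⟨⟨hp, hnd⟩, hτ, rfl⟩
    exact ⟨⟨hp, rfl⟩, hnd, trivial, by rintro a ha _ rfl rfl; exact hτ ha⟩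

theorem SimplePath.exists_concat_of_mem (h : G.SimplePath u w p) (he : e ∈ p) :
    ∃ a, G.SimplePath u (G.τ e) (a ++ [e]) := by
  obtain ⟨a, b, rfl⟩ := List.append_of_mem he
  obtain ⟨m, ha, hb⟩ := path_append_iff.1 h.1
  obtain ⟨rfl, -⟩ := path_cons_iff.1 hb
  rw [List.append_cons] at h
  exact ⟨a, h.prefix (path_concat_iff.2 ⟨ha, rfl⟩)⟩

theorem Path.exists_simplePath_subset (h : G.Path u w p) :
    ∃ q, G.SimplePath u w q ∧ q ⊆ p := by
  induction h with
  | nil v => exact ⟨[], ⟨.nil v, List.nodup_singleton v⟩, List.nil_subset _⟩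
  | @cons e w p _ ih =>
    obtain ⟨q, hq, hqp⟩ := ih
    by_cases hmem : G.ι e ∈ G.verts (G.τ e) q
    · -- shortcut the cycle that `e` closes
      obtain ⟨q₁, q₂, rfl, h₁, h₂⟩ := hq.1.exists_split_of_mem_verts hmem
      exact ⟨q₂, hq.suffix h₁ h₂,
        fun f hf => List.mem_cons_of_mem _ (hqp (List.mem_append_right _ hf))⟩
    · exact ⟨e :: q, ⟨.cons e hq.1, List.nodup_cons.2 ⟨hmem, hq.2⟩⟩, List.cons_subset_cons _ hqp⟩

end Paths

section PathsIn

variable {G : DGraph} {T : Set G.E} {u w : G.V} {e : G.E} {p : List G.E}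

theorem pathIn_nil_iff : G.PathIn T u w [] ↔ u = w := by
  simp [PathIn, path_nil_iff]

theorem pathIn_concat_iff :
    G.PathIn T u w (p ++ [e]) ↔ G.PathIn T u (G.ι e) p ∧ e ∈ T ∧ G.τ e = w := by
  simp only [PathIn, path_concat_iff, List.mem_append, List.mem_singleton]
  constructor
  · rintro ⟨⟨hp, rfl⟩, hT⟩
    exact ⟨⟨hp, fun f hf => hT f (.inl hf)⟩, hT e (.inr rfl), rfl⟩
  · rintro ⟨⟨hp, hT⟩, he, rfl⟩
    exact ⟨⟨hp, rfl⟩, by rintro f (hf | rfl) <;> solve_by_elim⟩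

theorem PathIn.concat (hp : G.PathIn T u (G.ι e) p) (he : e ∈ T) :
    G.PathIn T u (G.τ e) (p ++ [e]) :=
  pathIn_concat_iff.2 ⟨hp, he, rfl⟩

end PathsIn

section SpanningTrees

variable {G : DGraph} {v w : G.V} {T : Set G.E} {e : G.E} {p : List G.E}

theorem IsSpanningTree.existsUnique (hT : G.IsSpanningTree v T) (w : G.V) :
    ∃! p, G.PathIn T v w p :=
  hT.2.2 w (Set.mem_univ w)

theorem IsSpanningTree.eq_of_pathIn (hT : G.IsSpanningTree v T) {q : List G.E}
    (hp : G.PathIn T v w p) (hq : G.PathIn T v w q) : p = q :=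
  (hT.existsUnique w).unique hp hq

theorem IsSpanningTree.simplePath (hT : G.IsSpanningTree v T) (hp : G.PathIn T v w p) :
    G.SimplePath v w p := by
  obtain ⟨q, hq, hqp⟩ := hp.1.exists_simplePath_subset
  rwa [hT.eq_of_pathIn hp ⟨hq.1, fun f hf => hp.2 f (hqp hf)⟩]

theorem eq_of_pathIn_of_injOn (hv : ∀ e ∈ T, G.τ e ≠ v) (hinj : Set.InjOn G.τ T) :
    ∀ {w p q}, G.PathIn T v w p → G.PathIn T v w q → p = q := by
  intro w p
  induction p using List.reverseRecOn generalizing w with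
  | nil =>
    intro q hp hq
    obtain rfl := pathIn_nil_iff.1 hp
    rcases List.eq_nil_or_concat' q with rfl | ⟨q, f, rfl⟩
    · rfl
    · obtain ⟨-, hf, hfv⟩ := pathIn_concat_iff.1 hq
      exact absurd hfv (hv f hf)
  | append_singleton p e ih =>
    intro q hpe hq
    obtain ⟨hp, he, rfl⟩ := pathIn_concat_iff.1 hpe
    rcases List.eq_nil_or_concat' q with rfl | ⟨q, f, rfl⟩
    · exact absurd (pathIn_nil_iff.1 hq).symm (hv e he)
    · obtain ⟨hq', hf, hfe⟩ := pathIn_concat_iff.1 hq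
      obtain rfl := hinj hf he hfe
      rw [ih hp hq']

theorem isSpanningTree_iff :
    G.IsSpanningTree v T ↔
      (∀ e ∈ T, G.τ e ≠ v) ∧ Set.InjOn G.τ T ∧ ∀ w, ∃ p, G.PathIn T v w p := by
  constructor
  · intro hT
    refine ⟨fun e he hv => ?_, fun e he f hf hef => ?_, fun w => (hT.existsUnique w).exists⟩
    · obtain ⟨p, hp, -⟩ := hT.existsUnique (G.ι e)
      exact List.concat_ne_nil e p (hT.eq_of_pathIn (hp.concat he) (pathIn_nil_iff.2 hv.symm))
    · obtain ⟨p, hp, -⟩ := hT.existsUnique (G.ι e)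
      obtain ⟨q, hq, -⟩ := hT.existsUnique (G.ι f)
      exact (List.append_singleton_inj.1 (hT.eq_of_pathIn (hp.concat he) (hef ▸ hq.concat hf))).2
  · rintro ⟨hv, hinj, hreach⟩
    refine ⟨Set.mem_univ v, fun _ _ => ⟨trivial, trivial⟩, fun w _ => ?_⟩
    obtain ⟨p, hp⟩ := hreach w
    exact ⟨p, hp, fun q hq => eq_of_pathIn_of_injOn hv hinj hq hp⟩

theorem IsSpanningTree.exists_ne (hT : G.IsSpanningTree v T) (he : e ∉ T)
    (hp : G.PathIn T v (G.ι e) p) (hτ : G.τ e ∉ G.verts v p) :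
    ∃ T', G.IsSpanningTree v T' ∧ T' ≠ T := by
  obtain ⟨hv, hinj, hreach⟩ := isSpanningTree_iff.1 hT
  set T' := insert e {f ∈ T | G.τ f ≠ G.τ e}
  have hpe : G.PathIn T' v (G.τ e) (p ++ [e]) :=
    PathIn.concat ⟨hp.1, fun f hf => .inr ⟨hp.2 f hf, fun h => hτ (h ▸ mem_verts_of_mem hf)⟩⟩
      (Set.mem_insert _ _)
  have hreach' : ∀ q w, G.PathIn T v w q → ∃ q', G.PathIn T' v w q' := by
    intro q
    induction q using List.reverseRecOn with
    | nil => exact fun w hq => ⟨[], pathIn_nil_iff.2 (pathIn_nil_iff.1 hq)⟩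
    | append_singleton q f ih =>
      intro w hqf
      obtain ⟨hq, hf, rfl⟩ := pathIn_concat_iff.1 hqf
      by_cases hfe : G.τ f = G.τ e
      · exact ⟨_, hfe ▸ hpe⟩
      · obtain ⟨q', hq'⟩ := ih _ hq
        exact ⟨_, hq'.concat (.inr ⟨hf, hfe⟩)⟩
  refine ⟨T', isSpanningTree_iff.2 ⟨?_, ?_, fun w => ?_⟩, fun h => he (h ▸ Set.mem_insert _ _)⟩
  · rintro f (rfl | ⟨hf, -⟩)
    · rintro rfl; exact hτ start_mem_verts
    · exact hv f hf
  · rintro f (rfl | ⟨hf, hfe⟩) g (rfl | ⟨hg, hge⟩) hfg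
    · rfl
    · exact absurd hfg.symm hge
    · exact absurd hfg hfe
    · exact hinj hf hg hfg
  · obtain ⟨q, hq⟩ := hreach w
    exact hreach' q w hq

theorem IsSpanningTree.isBackEdge_iff (hT : G.IsSpanningTree v T) :
    G.IsBackEdge v T e ↔ ∀ p, G.PathIn T v (G.ι e) p → G.τ e ∈ G.verts v p := by
  constructor
  · intro h p hp
    obtain ⟨q, hq, -⟩ := hT.existsUnique (G.τ e)
    obtain ⟨r, rfl⟩ := h p q hp hq
    rw [verts_append]
    exact List.mem_append_left _ hq.1.end_mem_verts
  · intro h p q hp hq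
    obtain ⟨p₁, p₂, rfl, h₁, -⟩ := hp.1.exists_split_of_mem_verts (h p hp)
    rw [hT.eq_of_pathIn hq ⟨h₁, fun f hf => hp.2 f (List.mem_append_left _ hf)⟩]
    exact List.prefix_append _ _

theorem IsSpanningTree.pathIn_of_simplePath (hT : G.IsSpanningTree v T)
    (hback : ∀ e ∉ T, G.IsBackEdge v T e) : G.SimplePath v w p → G.PathIn T v w p := by
  induction p using List.reverseRecOn generalizing w with
  | nil => exact fun hp => ⟨hp.1, by simp⟩
  | append_singleton p e ih =>
    intro hpe
    obtain ⟨hp, hτ, rfl⟩ := simplePath_concat_iff.1 hpe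
    have hpT := ih hp
    have he : e ∈ T := by_contra fun he => hτ ((hT.isBackEdge_iff.1 (hback e he)) p hpT)
    exact hpT.concat he

theorem IsSpanningTree.uniqueSimplePaths_iff (hT : G.IsSpanningTree v T) :
    G.UniqueSimplePaths v ↔ ∀ e ∉ T, G.IsBackEdge v T e := by
  constructor
  · intro h e he
    refine hT.isBackEdge_iff.2 fun p hp => by_contra fun hτ => he ?_
    obtain ⟨q, hq, -⟩ := hT.existsUnique (G.τ e)
    have hqp : q = p ++ [e] := (h (G.τ e)).unique (hT.simplePath hq)
      (simplePath_concat_iff.2 ⟨hT.simplePath hp, hτ, rfl⟩)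
    exact hq.2 e (by simp [hqp])
  · intro hback w
    obtain ⟨p, hp, -⟩ := hT.existsUnique w
    exact ⟨p, hT.simplePath hp,
      fun q hq => hT.eq_of_pathIn (hT.pathIn_of_simplePath hback hq) hp⟩

theorem uniqueSimplePaths_of_existsUnique_isSpanningTree (h : ∃! T, G.IsSpanningTree v T) :
    G.UniqueSimplePaths v := by
  obtain ⟨T, hT, huniq⟩ := h
  refine hT.uniqueSimplePaths_iff.2 fun e he => hT.isBackEdge_iff.2 fun p hp => ?_
  by_contra hτ
  obtain ⟨T', hT', hne⟩ := hT.exists_ne he hp hτ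
  exact hne (huniq T' hT')

end SpanningTrees

namespace UniqueSimplePaths

variable {G : DGraph} {v : G.V}

theorem isSpanningTree_simplePathEdges (h : G.UniqueSimplePaths v) :
    G.IsSpanningTree v (G.simplePathEdges v) := by
  refine isSpanningTree_iff.2 ⟨?_, ?_, fun w => ?_⟩
  · rintro e ⟨w, p, hp, he⟩ hv
    obtain ⟨a, ha⟩ := hp.exists_concat_of_mem he
    have hnil : G.SimplePath v v [] := ⟨.nil v, List.nodup_singleton v⟩
    exact List.concat_ne_nil e a ((h v).unique (hv ▸ ha) hnil)
  · rintro e ⟨w, p, hp, he⟩ f ⟨w', p', hp', hf⟩ hef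
    obtain ⟨a, ha⟩ := hp.exists_concat_of_mem he
    obtain ⟨b, hb⟩ := hp'.exists_concat_of_mem hf
    exact (List.append_singleton_inj.1 ((h _).unique ha (hef ▸ hb))).2
  · obtain ⟨p, hp, -⟩ := h w
    exact ⟨p, hp.1, fun e he => ⟨w, p, hp, he⟩⟩

theorem subset_of_isSpanningTree (h : G.UniqueSimplePaths v) {T₁ T₂ : Set G.E}
    (hT₁ : G.IsSpanningTree v T₁) (hT₂ : G.IsSpanningTree v T₂) : T₁ ⊆ T₂ := by
  intro e he
  obtain ⟨p, hp, -⟩ := hT₁.existsUnique (G.ι e)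
  obtain ⟨q, hq, -⟩ := hT₂.existsUnique (G.τ e)
  have hqp : q = p ++ [e] :=
    (h _).unique (hT₂.simplePath hq) (hT₁.simplePath (hp.concat he))
  exact hq.2 e (by simp [hqp])

theorem existsUnique_isSpanningTree (h : G.UniqueSimplePaths v) :
    ∃! T, G.IsSpanningTree v T :=
  ⟨_, h.isSpanningTree_simplePathEdges, fun _ hT =>
    (h.subset_of_isSpanningTree hT h.isSpanningTree_simplePathEdges).antisymm
      (h.subset_of_isSpanningTree h.isSpanningTree_simplePathEdges hT)⟩

end UniqueSimplePaths

theorem uspp_tfae_general (G : DGraph) (v : G.V) :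
    ((∀ w : G.V, ∃! p : List G.E, G.SimplePath v w p) ↔
        (∃! ES : Set G.E, G.IsSpanningTree v ES)) ∧
      ((∀ w : G.V, ∃! p : List G.E, G.SimplePath v w p) ↔
        (∃ ES : Set G.E, G.IsSpanningTree v ES ∧
          ∀ e : G.E, e ∉ ES → ∀ p q : List G.E,
            G.PathIn ES v (G.ι e) p → G.PathIn ES v (G.τ e) q → q <+: p)) :=
  ⟨⟨UniqueSimplePaths.existsUnique_isSpanningTree,
      uniqueSimplePaths_of_existsUnique_isSpanningTree⟩,
    ⟨fun (h : G.UniqueSimplePaths v) => ⟨_, h.isSpanningTree_simplePathEdges,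
        h.isSpanningTree_simplePathEdges.uniqueSimplePaths_iff.1 h⟩,
      fun ⟨_, hT, hback⟩ => hT.uniqueSimplePaths_iff.2 hback⟩⟩

/-- For a rooted directed graph `(Γ, v)` the following are equivalent:
(1) each vertex is reached from `v` by a unique simple directed path;
(2) `(Γ, v)` admits a unique directed spanning tree;
(3) `(Γ, v)` admits a directed spanning tree `T` such that for each edge `e`
outside `T`, the tree geodesic from `v` to `τ(e)` is an initial segment of the
tree geodesic from `v` to `ι(e)`. -/
theorem uspp_tfae (G : DGraph) (v : G.V) (hroot : G.Rooted v) :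
    ((∀ w : G.V, ∃! p : List G.E, G.SimplePath v w p) ↔
        (∃! ES : Set G.E, G.IsSpanningTree v ES)) ∧
      ((∀ w : G.V, ∃! p : List G.E, G.SimplePath v w p) ↔
        (∃ ES : Set G.E, G.IsSpanningTree v ES ∧
          ∀ e : G.E, e ∉ ES → ∀ p q : List G.E,
            G.PathIn ES v (G.ι e) p → G.PathIn ES v (G.τ e) q → q <+: p)) :=
  uspp_tfae_general G v

end DGraph
end

section
/- Let A be a finite set, let A^r be the right zero semigroup on A (with ab = b), and consider the Cayley graph of (A^r)^I rooted at the identity. Then the transition semigroup of the McCammond expansion of this rooted Cayley graph is a finite band (every element is idempotent). -/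
/-- The state set of the McCammond expansion of the Cayley graph of the right
zero semigroup on `A` (rooted at the adjoined identity `1`): simple paths from
`1` correspond exactly to distinct-letter words over `A`. -/
abbrev RZState (A : Type) := {l : List A // l.Nodup}

/-- The action of a letter `a` on a simple path (distinct-letter word) `s` in
the McCammond expansion of the Cayley graph of the right zero semigroup: if
`a` has not yet been visited the path is extended by `a`; otherwise the path
is truncated to its initial segment ending at the vertex `a`. -/
def rzStep {A : Type} [DecidableEq A] (a : A) (s : RZState A) : RZState A :=
  if h : a ∈ s.1 then
    ⟨s.1.take (s.1.idxOf a + 1), (List.take_sublist _ _).nodup s.2⟩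
  else
    ⟨s.1 ++ [a], by
      rw [List.nodup_append]
      exact ⟨s.2, List.nodup_singleton a, by simp; rintro x hx rfl; exact h hx⟩⟩

/-- The transformation of the state set induced by the word `w ∈ A*`, reading
letters from left to right. -/
def rzAct {A : Type} [DecidableEq A] (w : List A) (s : RZState A) : RZState A :=
  w.foldl (fun t a => rzStep a t) s

/-!
The states are the loop-erased walks, and the bottom letter `x` of a path is never erased:
reading any word from a path starting at `x` and then reading `x` returns the path `[x]`.
So for `w ≠ []` and a path `x :: l`, either `w = u ++ x :: v`, and then `w` and `w w` both send
`x :: l` to the image of `[x]` under `v`, or `x ∉ w`, and then `x` stays inert at the bottom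
while `w` acts on `l`; induction on the path gives `w w = w`.
-/

variable {A : Type} [DecidableEq A]

/-- `rzStep` on the underlying lists; no simplicity of the path is needed for the argument. -/
def pathStep (a : A) (l : List A) : List A :=
  if a ∈ l then l.take (l.idxOf a + 1) else l ++ [a]

def pathAct (w l : List A) : List A :=
  w.foldl (fun t a => pathStep a t) l

lemma rzStep_val (a : A) (s : RZState A) : (rzStep a s).1 = pathStep a s.1 := by
  by_cases h : a ∈ s.1 <;> simp [rzStep, pathStep, h]

lemma rzAct_val (w : List A) (s : RZState A) : (rzAct w s).1 = pathAct w s.1 := by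
  induction w generalizing s with
  | nil => rfl
  | cons a w ih => exact (ih (rzStep a s)).trans (congrArg _ (rzStep_val a s))

lemma pathAct_cons (a : A) (w l : List A) : pathAct (a :: w) l = pathAct w (pathStep a l) := rfl

lemma pathAct_append (u v l : List A) : pathAct (u ++ v) l = pathAct v (pathAct u l) :=
  List.foldl_append

lemma pathStep_cons_self (x : A) (l : List A) : pathStep x (x :: l) = [x] := by
  simp [pathStep]

lemma pathStep_cons_of_ne {a x : A} (h : a ≠ x) (l : List A) :
    pathStep a (x :: l) = x :: pathStep a l := by
  by_cases ha : a ∈ l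
  · simp [pathStep, ha, List.idxOf_cons_ne l (Ne.symm h)]
  · simp [pathStep, ha, h]

lemma pathAct_cons_of_notMem {x : A} {w : List A} (h : x ∉ w) (l : List A) :
    pathAct w (x :: l) = x :: pathAct w l := by
  induction w generalizing l with
  | nil => rfl
  | cons a w ih =>
    rw [List.mem_cons, not_or] at h
    rw [pathAct_cons, pathAct_cons, pathStep_cons_of_ne (Ne.symm h.1), ih h.2]

lemma exists_pathAct_cons_eq_cons (x : A) (w l : List A) :
    ∃ l', pathAct w (x :: l) = x :: l' := by
  induction w generalizing l with
  | nil => exact ⟨l, rfl⟩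
  | cons a w ih =>
    rw [pathAct_cons]
    by_cases hax : a = x
    · subst hax
      rw [pathStep_cons_self]
      exact ih []
    · rw [pathStep_cons_of_ne hax]
      exact ih _

lemma pathAct_append_cons_self (x : A) (u v l : List A) :
    pathAct (u ++ x :: v) (x :: l) = pathAct v [x] := by
  obtain ⟨l', hl'⟩ := exists_pathAct_cons_eq_cons x u l
  rw [pathAct_append, hl', pathAct_cons, pathStep_cons_self]

lemma pathAct_append_self {w : List A} (hw : w ≠ []) (l : List A) :
    pathAct (w ++ w) l = pathAct w l := by
  induction l with
  | nil =>
    obtain ⟨x, w', rfl⟩ := List.exists_cons_of_ne_nil hw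
    rw [List.cons_append, pathAct_cons, pathAct_cons]
    exact pathAct_append_cons_self x w' w' []
  | cons x l ih =>
    by_cases hx : x ∈ w
    · obtain ⟨u, v, rfl⟩ := List.append_of_mem hx
      rw [← List.append_assoc, pathAct_append_cons_self, pathAct_append_cons_self]
    · have hxx : x ∉ w ++ w := by simp [hx]
      rw [pathAct_cons_of_notMem hxx, pathAct_cons_of_notMem hx, ih]

lemma rzAct_rzAct_self {w : List A} (hw : w ≠ []) (s : RZState A) :
    rzAct w (rzAct w s) = rzAct w s :=
  Subtype.ext <| by rw [rzAct_val, rzAct_val, ← pathAct_append, pathAct_append_self hw]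

/-- The transition semigroup of the McCammond expansion of the Cayley graph of
the right zero semigroup on a finite set `A` is a finite band: the set of
transformations induced by nonempty words is finite, and each such
transformation is idempotent. -/
theorem rz_mc_transition_semigroup_is_finite_band
    (A : Type) [DecidableEq A] [Fintype A] :
    Set.Finite {f : RZState A → RZState A |
        ∃ w : List A, w ≠ [] ∧ f = rzAct w} ∧
      ∀ w : List A, w ≠ [] → ∀ s : RZState A,
        rzAct w (rzAct w s) = rzAct w s :=
  ⟨Set.toFinite _, fun _ hw => rzAct_rzAct_self hw⟩
end
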